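/- arXiv:math/0410313 — 7 statements merged into one kernel-verified Lean document; each statement's English description precedes it below -/
import Mathlib

section
/- For any subsequence (i_1,…,i_k) of (1,…,n) there exists an element in the Hurwitz orbit of (s_1,…,s_n) whose first k entries are (s_{i_1},…,s_{i_k}). -/
/-!
Bubble the entry `s_{i_1}` leftwards to position 1 by the moves `σ_{i_1-1}, …, σ_1`: each
`σ_i` puts the old `(i+1)`-st entry at position `i` and disturbs nothing outside `{i, i+1}`.
Then bubble `s_{i_2}`, still untouched at position `i_2 ≥ 2`, to position 2, and so on: every
move stays inside the window between the current target position and the current `i_m`, so it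
neither disturbs the prefix already built nor the entries to the right of `i_m`.
-/

/-- The Hurwitz generator `σ_i` acting on tuples in `G^n` (0-indexed). -/
def hurwitzSigma {G : Type*} [Group G] {n : ℕ} (i : ℕ) (hi : i + 1 < n)
    (s : Fin n → G) : Fin n → G := fun j =>
  if j.val = i then s ⟨i + 1, hi⟩
  else if j.val = i + 1 then (s ⟨i + 1, hi⟩)⁻¹ * s ⟨i, by omega⟩ * s ⟨i + 1, hi⟩
  else s j

/-- One Hurwitz move (a generator or its inverse). -/
def hurwitzRel {G : Type*} [Group G] {n : ℕ} (s t : Fin n → G) : Prop :=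
  ∃ (i : ℕ) (hi : i + 1 < n), t = hurwitzSigma i hi s ∨ s = hurwitzSigma i hi t

/-- The Hurwitz orbit of a tuple: everything reachable by braid group elements. -/
def hurwitzOrbit {G : Type*} [Group G] {n : ℕ} (s : Fin n → G) : Set (Fin n → G) :=
  {t | Relation.ReflTransGen hurwitzRel s t}

lemma Fin.val_le_of_strictMono {k n : ℕ} {f : Fin k → Fin n} (hf : StrictMono f) (i : Fin k) :
    (i : ℕ) ≤ f i :=
  calc (i : ℕ) = (Finset.Iio i).card := (Fin.card_Iio i).symm
    _ ≤ (Finset.Iio (f i)).card :=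
      Finset.card_le_card_of_injOn f (fun _ hj ↦ by simpa using hf (by simpa using hj))
        hf.injective.injOn
    _ = f i := Fin.card_Iio (f i)

section Hurwitz

variable {G : Type*} [Group G] {n : ℕ}

lemma mem_hurwitzOrbit_self (s : Fin n → G) : s ∈ hurwitzOrbit s :=
  Relation.ReflTransGen.refl

lemma mem_hurwitzOrbit_trans {s t u : Fin n → G} (ht : t ∈ hurwitzOrbit s)
    (hu : u ∈ hurwitzOrbit t) : u ∈ hurwitzOrbit s :=
  Relation.ReflTransGen.trans ht hu

lemma hurwitzSigma_mem_hurwitzOrbit (i : ℕ) (hi : i + 1 < n) (s : Fin n → G) :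
    hurwitzSigma i hi s ∈ hurwitzOrbit s :=
  Relation.ReflTransGen.single ⟨i, hi, Or.inl rfl⟩

lemma hurwitzSigma_apply_self (i : ℕ) (hi : i + 1 < n) (s : Fin n → G) :
    hurwitzSigma i hi s ⟨i, by omega⟩ = s ⟨i + 1, hi⟩ :=
  if_pos rfl

lemma hurwitzSigma_apply_of_ne (i : ℕ) (hi : i + 1 < n) (s : Fin n → G) {p : Fin n}
    (hp : (p : ℕ) ≠ i) (hp' : (p : ℕ) ≠ i + 1) : hurwitzSigma i hi s p = s p := by
  rw [hurwitzSigma, if_neg hp, if_neg hp']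

lemma exists_mem_hurwitzOrbit_moveLeft (j d : ℕ) (t : Fin n → G) (h : j + d < n) :
    ∃ t' ∈ hurwitzOrbit t, t' ⟨j, by omega⟩ = t ⟨j + d, h⟩ ∧
      ∀ p : Fin n, ((p : ℕ) < j ∨ j + d < p) → t' p = t p := by
  induction d generalizing t with
  | zero => exact ⟨t, mem_hurwitzOrbit_self t, rfl, fun _ _ ↦ rfl⟩
  | succ d ih =>
    obtain ⟨t', ht', ht'_j, ht'_out⟩ := ih (hurwitzSigma (j + d) h t) (by omega)
    refine ⟨t', mem_hurwitzOrbit_trans (hurwitzSigma_mem_hurwitzOrbit _ h t) ht', ?_, ?_⟩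
    · rw [ht'_j, hurwitzSigma_apply_self]
      rfl
    · intro p hp
      rw [ht'_out p (by omega), hurwitzSigma_apply_of_ne _ _ _ (by omega) (by omega)]

/-- The second conjunct is the induction invariant: it keeps the next `s (ι j)` in place. -/
lemma exists_mem_hurwitzOrbit_prefix_eq {k : ℕ} (hk : k ≤ n) (s : Fin n → G)
    (ι : Fin k → Fin n) (hι : StrictMono ι) :
    ∃ t ∈ hurwitzOrbit s, (∀ j : Fin k, t ⟨j, by omega⟩ = s (ι j)) ∧
      ∀ p : Fin n, (∀ j, ι j < p) → t p = s p := by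
  induction k with
  | zero => exact ⟨s, mem_hurwitzOrbit_self s, finZeroElim, fun _ _ ↦ rfl⟩
  | succ k ih =>
    obtain ⟨t, ht, ht_prefix, ht_right⟩ :=
      ih (by omega) (ι ∘ Fin.castSucc) (hι.comp Fin.strictMono_castSucc)
    have hlast : k ≤ ι (Fin.last k) := Fin.val_le_of_strictMono hι (Fin.last k)
    obtain ⟨t', ht', ht'_k, ht'_out⟩ :=
      exists_mem_hurwitzOrbit_moveLeft k (ι (Fin.last k) - k) t (by omega)
    have hright : ∀ p : Fin n, ι (Fin.last k) ≤ p → t p = s p := fun p hp ↦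
      ht_right p fun j ↦ (hι (Fin.castSucc_lt_last j)).trans_le hp
    refine ⟨t', mem_hurwitzOrbit_trans ht ht', Fin.forall_fin_succ'.2 ⟨fun j ↦ ?_, ?_⟩,
      fun p hp ↦ ?_⟩
    · rw [ht'_out _ (.inl j.isLt)]
      exact ht_prefix j
    · have hsource : (⟨k + (ι (Fin.last k) - k), by omega⟩ : Fin n) = ι (Fin.last k) :=
        Fin.ext (Nat.add_sub_cancel' hlast)
      exact ht'_k.trans (by rw [hsource]; exact hright _ le_rfl)
    · have hp_last : ι (Fin.last k) < p := hp (Fin.last k)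
      rw [ht'_out p (.inr (by omega))]
      exact hright p hp_last.le

end Hurwitz

/-- For any subsequence `(i_1,…,i_k)` of `(1,…,n)` there is an element of the
Hurwitz orbit of `s` whose first `k` entries are `(s_{i_1},…,s_{i_k})`. -/
theorem hurwitz_orbit_subsequence {G : Type*} [Group G] {n k : ℕ} (hk : k ≤ n)
    (s : Fin n → G) (ι : Fin k → Fin n) (hι : StrictMono ι) :
    ∃ t ∈ hurwitzOrbit s, ∀ j : Fin k, t ⟨j.val, lt_of_lt_of_le j.isLt hk⟩ = s (ι j) := by
  obtain ⟨t, ht, ht_prefix, -⟩ := exists_mem_hurwitzOrbit_prefix_eq hk s ι hι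
  exact ⟨t, ht, ht_prefix⟩
end

section
/- If the Hurwitz orbit of (s_1,…,s_n) ∈ G^n is finite, then some positive power of c = s_1 ⋯ s_n is central in the subgroup of G generated by s_1,…,s_n. -/
/-! Pushing the first entry of a tuple to the end by `σ_1, …, σ_{n-1}` conjugates it by the
product of the others, and pulling it back to the front by `σ_{n-1}, …, σ_1` conjugates all the
others by it. Combined with induction on `n`, this shows that the full twist acts on `G^n` as
simultaneous conjugation by the product `c = s_1 ⋯ s_n`, an invariant of the action. So all the
tuples `c^{-k} s c^k` lie in the orbit; if it is finite, two of them coincide, say for `k < l`,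
and then `c^{l-k}` commutes with every `s_i`. -/

section

variable {G : Type*} [Group G]

def conjTuple {n : ℕ} (g : G) (t : Fin n → G) : Fin n → G := fun i => g⁻¹ * t i * g

theorem hurwitzSigma_zero_cons_cons {m : ℕ} (a b : G) (t : Fin m → G) (h : 0 + 1 < m + 2) :
    hurwitzSigma 0 h (Fin.cons a (Fin.cons b t) : Fin (m + 2) → G) =
      Fin.cons b (Fin.cons (b⁻¹ * a * b) t) := by
  funext j
  cases j using Fin.cases with
  | zero => simp [hurwitzSigma]
  | succ j => cases j using Fin.cases <;> simp [hurwitzSigma]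

theorem hurwitzSigma_succ_cons {m : ℕ} (i : ℕ) (hi : i + 1 + 1 < m + 1) (a : G)
    (t : Fin m → G) :
    hurwitzSigma (i + 1) hi (Fin.cons a t : Fin (m + 1) → G) =
      Fin.cons a (hurwitzSigma i (by omega) t) := by
  funext j
  cases j using Fin.cases with
  | zero => simp [hurwitzSigma]
  | succ j =>
    have cons_mk : ∀ k (hk : k + 1 < m + 1), (Fin.cons a t : Fin (m + 1) → G) ⟨k + 1, hk⟩ =
        t ⟨k, by omega⟩ := fun _ _ => rfl
    simp [hurwitzSigma, cons_mk]

theorem prod_ofFn_hurwitzSigma {n : ℕ} (i : ℕ) (hi : i + 1 < n) (t : Fin n → G) :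
    (List.ofFn (hurwitzSigma i hi t)).prod = (List.ofFn t).prod := by
  induction i generalizing n with
  | zero =>
    obtain ⟨m, rfl⟩ : ∃ m, n = m + 2 := ⟨n - 2, by omega⟩
    obtain ⟨a, b, u, rfl⟩ : ∃ a b u, t = Fin.cons a (Fin.cons b u) :=
      ⟨_, _, _, by rw [Fin.cons_self_tail, Fin.cons_self_tail]⟩
    simp [hurwitzSigma_zero_cons_cons, List.ofFn_succ, mul_assoc]
  | succ i ih =>
    obtain ⟨m, rfl⟩ : ∃ m, n = m + 1 := ⟨n - 1, by omega⟩
    obtain ⟨a, u, rfl⟩ : ∃ a u, t = Fin.cons a u := ⟨_, _, (Fin.cons_self_tail t).symm⟩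
    simp [hurwitzSigma_succ_cons, List.ofFn_succ, ih]

theorem hurwitzRel.cons {m : ℕ} (a : G) {t u : Fin m → G} (h : hurwitzRel t u) :
    hurwitzRel (Fin.cons a t : Fin (m + 1) → G) (Fin.cons a u) := by
  obtain ⟨i, hi, h⟩ := h
  refine ⟨i + 1, by omega, ?_⟩
  simpa only [hurwitzSigma_succ_cons, Fin.cons_inj, true_and] using h

theorem reflTransGen_hurwitzRel_cons {m : ℕ} (a : G) {t u : Fin m → G}
    (h : Relation.ReflTransGen hurwitzRel t u) :
    Relation.ReflTransGen hurwitzRel (Fin.cons a t : Fin (m + 1) → G) (Fin.cons a u) :=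
  h.lift (fun v => (Fin.cons a v : Fin (m + 1) → G)) fun _ _ => hurwitzRel.cons a

theorem prod_ofFn_eq_of_reflTransGen_hurwitzRel {n : ℕ} {t u : Fin n → G}
    (h : Relation.ReflTransGen hurwitzRel t u) :
    (List.ofFn u).prod = (List.ofFn t).prod := by
  induction h with
  | refl => rfl
  | tail _ hrel ih =>
    obtain ⟨i, hi, rfl | rfl⟩ := hrel
    · rw [prod_ofFn_hurwitzSigma, ih]
    · rw [← ih, prod_ofFn_hurwitzSigma]

theorem reflTransGen_hurwitzRel_cons_snoc {m : ℕ} (a : G) (t : Fin m → G) :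
    Relation.ReflTransGen hurwitzRel (Fin.cons a t : Fin (m + 1) → G)
      (Fin.snoc t ((List.ofFn t).prod⁻¹ * a * (List.ofFn t).prod)) := by
  induction m generalizing a with
  | zero =>
    rw [show (Fin.snoc t _ : Fin 1 → G) = Fin.cons a t by
      funext j; fin_cases j; simp [Fin.snoc]]
  | succ m ih =>
    obtain ⟨b, u, rfl⟩ : ∃ b u, t = Fin.cons b u := ⟨_, _, (Fin.cons_self_tail t).symm⟩
    have step : hurwitzRel (Fin.cons a (Fin.cons b u) : Fin (m + 2) → G)
        (Fin.cons b (Fin.cons (b⁻¹ * a * b) u)) :=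
      ⟨0, by omega, Or.inl (hurwitzSigma_zero_cons_cons a b u _).symm⟩
    refine .head step ?_
    convert reflTransGen_hurwitzRel_cons b (ih (b⁻¹ * a * b) u) using 1
    simp [← Fin.cons_snoc_eq_snoc_cons, List.ofFn_succ, mul_assoc]

theorem reflTransGen_hurwitzRel_snoc_cons {m : ℕ} (t : Fin m → G) (a : G) :
    Relation.ReflTransGen hurwitzRel (Fin.snoc t a : Fin (m + 1) → G)
      (Fin.cons a (conjTuple a t)) := by
  induction m with
  | zero =>
    rw [show (Fin.snoc t a : Fin 1 → G) = Fin.cons a (conjTuple a t) by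
      funext j; fin_cases j; simp [Fin.snoc]]
  | succ m ih =>
    obtain ⟨b, u, rfl⟩ : ∃ b u, t = Fin.cons b u := ⟨_, _, (Fin.cons_self_tail t).symm⟩
    rw [← Fin.cons_snoc_eq_snoc_cons]
    refine .tail (reflTransGen_hurwitzRel_cons b (ih u)) ⟨0, by omega, Or.inl ?_⟩
    rw [hurwitzSigma_zero_cons_cons]
    congr 1
    funext j
    cases j using Fin.cases <;> simp [conjTuple]

theorem reflTransGen_hurwitzRel_conjTuple_prod {n : ℕ} (t : Fin n → G) :
    Relation.ReflTransGen hurwitzRel t (conjTuple (List.ofFn t).prod t) := by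
  induction n with
  | zero => rw [Subsingleton.elim (conjTuple _ t) t]
  | succ m ih =>
    obtain ⟨a, u, rfl⟩ : ∃ a u, t = Fin.cons a u := ⟨_, _, (Fin.cons_self_tail t).symm⟩
    set d := (List.ofFn u).prod
    have hd : (List.ofFn (conjTuple d u)).prod = d := prod_ofFn_eq_of_reflTransGen_hurwitzRel (ih u)
    have h := ((reflTransGen_hurwitzRel_cons a (ih u)).trans
      (reflTransGen_hurwitzRel_cons_snoc a _)).trans (reflTransGen_hurwitzRel_snoc_cons _ _)
    convert h using 1
    rw [hd]
    funext j
    cases j using Fin.cases <;>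
      simp only [conjTuple, List.ofFn_succ, Fin.cons_zero, Fin.cons_succ, List.prod_cons, d] <;>
      group

theorem conjTuple_prod_mem_hurwitzOrbit {n : ℕ} {s t : Fin n → G} (ht : t ∈ hurwitzOrbit s) :
    conjTuple (List.ofFn s).prod t ∈ hurwitzOrbit s := by
  rw [← prod_ofFn_eq_of_reflTransGen_hurwitzRel ht]
  exact Relation.ReflTransGen.trans ht (reflTransGen_hurwitzRel_conjTuple_prod t)

theorem conjTuple_pow_prod_mem_hurwitzOrbit {n : ℕ} (s : Fin n → G) (k : ℕ) :
    conjTuple ((List.ofFn s).prod ^ k) s ∈ hurwitzOrbit s := by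
  induction k with
  | zero =>
    rw [pow_zero, show conjTuple (1 : G) s = s from funext fun i => by simp [conjTuple]]
    exact .refl
  | succ k ih =>
    convert conjTuple_prod_mem_hurwitzOrbit ih using 1
    funext i
    simp [conjTuple, pow_succ, mul_assoc]

theorem commute_pow_sub_of_conj_pow_eq {c x : G} {k l : ℕ} (hkl : k ≤ l)
    (h : (c ^ k)⁻¹ * x * c ^ k = (c ^ l)⁻¹ * x * c ^ l) : Commute (c ^ (l - k)) x := by
  obtain ⟨m, rfl⟩ := Nat.exists_eq_add_of_le hkl
  rw [add_comm, pow_add, mul_inv_rev] at h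
  have hx : x = (c ^ m)⁻¹ * x * c ^ m :=
    mul_right_cancel (mul_left_cancel (a := (c ^ k)⁻¹) (by simpa only [mul_assoc] using h))
  rw [Nat.add_sub_cancel_left]
  exact eq_inv_mul_iff_mul_eq.1 (hx.trans (mul_assoc _ _ _))

end

/-- If the Hurwitz orbit of `(s_1,…,s_n)` is finite then some positive power of
`c = s_1 ⋯ s_n` is central in the subgroup generated by the `s_i`. -/
theorem hurwitz_finite_orbit_central_power {G : Type*} [Group G] {n : ℕ}
    (s : Fin n → G) (hfin : (hurwitzOrbit s).Finite) :
    ∃ m : ℕ, 0 < m ∧ ∀ g ∈ Subgroup.closure (Set.range s),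
      Commute ((List.ofFn s).prod ^ m) g := by
  set c := (List.ofFn s).prod
  obtain ⟨k, l, hkl, heq⟩ :=
    hfin.exists_lt_map_eq_of_forall_mem (conjTuple_pow_prod_mem_hurwitzOrbit s)
  have hcomm : Set.range s ⊆ Subgroup.centralizer {c ^ (l - k)} := by
    rintro _ ⟨i, rfl⟩
    exact Subgroup.mem_centralizer_singleton_iff.2
      (commute_pow_sub_of_conj_pow_eq hkl.le (congrFun heq i)).eq.symm
  refine ⟨l - k, Nat.sub_pos_of_lt hkl, fun g hg => ?_⟩
  exact (Subgroup.mem_centralizer_singleton_iff.1 ((Subgroup.closure_le _).2 hcomm hg)).symm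
end

section
/- Let (s_1,…,s_n) be complex reflections in GL(V) with dim V = n, with roots r_i and coroots ř_i, and let C = (ř_i(r_j))_{i,j} be the Cartan matrix. If C is invertible, then the roots r_1,…,r_n form a basis of V, and in this basis the matrix of s_i equals the identity matrix with the i-th row of C subtracted from its i-th row; in particular C determines the tuple (s_1,…,s_n) up to simultaneous conjugation in GL(V). -/
/-!
Evaluating the coroots on `∑ c_j r_j = 0` gives `C c = 0`, so an invertible Cartan matrix makes
the `n = dim V` roots a basis. Two tuples of reflections with the same Cartan matrix then have root
bases, and the linear equivalence sending one root basis to the other carries each coroot `ř'_i`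
back to `ř_i` (they agree on the basis), hence conjugates `s_i` to `s'_i`.
-/

open Module

section
variable {ι R M : Type*} [CommRing R] [AddCommGroup M] [Module R M]

theorem linearIndependent_of_isUnit_det_pairing [Fintype ι] [DecidableEq ι]
    {f : ι → M →ₗ[R] R} {v : ι → M} (h : IsUnit (Matrix.of fun i j => f i (v j)).det) :
    LinearIndependent R v :=
  .of_comp (LinearMap.pi f) <|
    Matrix.linearIndependent_cols_of_isUnit ((Matrix.isUnit_iff_isUnit_det _).2 h)

theorem Module.Basis.comp_equiv_eq_of_apply_eq {M' : Type*} [AddCommGroup M'] [Module R M']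
    (b : Basis ι R M) (b' : Basis ι R M') {f : M →ₗ[R] R} {f' : M' →ₗ[R] R}
    (h : ∀ j, f' (b' j) = f (b j)) :
    f' ∘ₗ (b.equiv b' (.refl ι)).toLinearMap = f :=
  b.ext fun j => by simp [h]

end

theorem cartan_matrix_determines_tuple_general (K : Subfield ℂ) (V : Type*) [AddCommGroup V]
    [Module K V] [FiniteDimensional K V] {n : ℕ} (hdim : Module.finrank K V = n)
    (s : Fin n → V ≃ₗ[K] V) (r : Fin n → V) (rv : Fin n → V →ₗ[K] K)
    (hs : ∀ i x, s i x = x - rv i x • r i)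
    (hC : IsUnit (Matrix.of fun i j => rv i (r j)).det) :
    (LinearIndependent K r ∧ Submodule.span K (Set.range r) = ⊤) ∧
    (∀ i j, s i (r j) = r j - rv i (r j) • r i) ∧
    (∀ (s' : Fin n → V ≃ₗ[K] V) (r' : Fin n → V) (rv' : Fin n → V →ₗ[K] K),
      (∀ i x, s' i x = x - rv' i x • r' i) →
      (∀ i j, rv' i (r' j) = rv i (r j)) →
      ∃ g : V ≃ₗ[K] V, ∀ i x, s' i (g x) = g (s i x)) := by
  have hcard : Fintype.card (Fin n) = finrank K V := by simp [hdim]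
  have hli := linearIndependent_of_isUnit_det_pairing hC
  refine ⟨⟨hli, hli.span_eq_top_of_card_eq_finrank' hcard⟩, fun i j => hs i (r j), ?_⟩
  intro s' r' rv' hs' hC'
  have hli' : LinearIndependent K r' :=
    linearIndependent_of_isUnit_det_pairing (f := rv') (by simpa only [hC'] using hC)
  let b := basisOfLinearIndependentOfCardEqFinrank' r hli hcard
  let b' := basisOfLinearIndependentOfCardEqFinrank' r' hli' hcard
  let g := b.equiv b' (.refl _)
  refine ⟨g, fun i x => ?_⟩
  have hgr : g (r i) = r' i := by simpa [b, b'] using b.equiv_apply i b' (.refl _)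
  have hrv : rv' i ∘ₗ g.toLinearMap = rv i :=
    b.comp_equiv_eq_of_apply_eq b' fun j => by simpa [b, b'] using hC' i j
  rw [hs', hs, map_sub, map_smul, hgr, ← hrv]
  rfl

/-- If the Cartan matrix `C = (ř_i(r_j))` of a tuple of `n = dim V` complex
reflections is invertible, then the roots form a basis of `V`, in this basis the
matrix of `s_i` is the identity with the `i`-th row of `C` subtracted from its
`i`-th row (equivalently `s_i(r_j) = r_j - C_{ij} • r_i`), and `C` determines the
tuple up to simultaneous conjugation in `GL(V)`. -/
theorem cartan_matrix_determines_tuple (K : Subfield ℂ) (V : Type*) [AddCommGroup V]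
    [Module K V] [FiniteDimensional K V] {n : ℕ} (hdim : Module.finrank K V = n)
    (s : Fin n → V ≃ₗ[K] V) (r : Fin n → V) (rv : Fin n → V →ₗ[K] K)
    (hord : ∀ i, IsOfFinOrder (s i)) (hr0 : ∀ i, r i ≠ 0)
    (hs : ∀ i x, s i x = x - rv i x • r i)
    (hC : IsUnit (Matrix.of fun i j => rv i (r j)).det) :
    (LinearIndependent K r ∧ Submodule.span K (Set.range r) = ⊤) ∧
    (∀ i j, s i (r j) = r j - rv i (r j) • r i) ∧
    (∀ (s' : Fin n → V ≃ₗ[K] V) (r' : Fin n → V) (rv' : Fin n → V →ₗ[K] K),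
      (∀ i x, s' i x = x - rv' i x • r' i) →
      (∀ i j, rv' i (r' j) = rv i (r j)) →
      ∃ g : V ≃ₗ[K] V, ∀ i x, s' i (g x) = g (s i x)) :=
  cartan_matrix_determines_tuple_general K V hdim s r rv hs hC
end

section
/- Coleman's lemma: Let (s_1,…,s_n) be complex reflections whose roots r_i form a basis of V, with Cartan matrix C. Write C = U + L where U is upper triangular unipotent and L is lower triangular with diagonal entries −ζ_i (ζ_i the nontrivial eigenvalue of s_i). Then the matrix of the Coxeter element c = s_1 s_2 ⋯ s_n in the basis (r_i) equals −U⁻¹L. -/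
/-!
Let `u_i`, `ℓ_i` be the linear forms with `u_i (r_j) = U_ij` and `ℓ_i (r_j) = L_ij`. Precomposing
a form `g` with `s_k` replaces it by `g - g (r_k) • ř_k`, so `s_k` leaves `g` alone when
`g (r_k) = 0`. Since `u_i` kills `r_k` for `k < i`, `u_i ∘ c = (u_i ∘ s_i) ∘ s_{i+1} ⋯ s_n`, and
`u_i ∘ s_i = u_i - ř_i = -ℓ_i` kills `r_k` for `k > i`. Hence `u_i ∘ c = -ℓ_i`, that is
`U * [c] = -L` for the matrix `[c]` of `c`, and `U` is unitriangular, hence invertible.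
-/

open Module

section PreReflection

variable {K V ι : Type*} [CommRing K] [AddCommGroup V] [Module K V]

theorem Module.Dual.comp_preReflection (g f : Dual K V) (x : V) :
    g ∘ₗ preReflection x f = g - g x • f := by
  ext y
  simp [preReflection_apply, mul_comm]

variable {r : ι → V} {φ : ι → Dual K V}

theorem Module.Dual.comp_prod_preReflection_of_forall_eq_zero (g : Dual K V) {l : List ι}
    (hl : ∀ k ∈ l, g (r k) = 0) :
    g ∘ₗ (l.map fun k => preReflection (r k) (φ k)).prod = g := by
  induction l with
  | nil => rfl
  | cons k t ih =>
    rw [List.map_cons, List.prod_cons, Module.End.mul_eq_comp, ← LinearMap.comp_assoc,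
      Dual.comp_preReflection, hl k List.mem_cons_self, zero_smul, sub_zero]
    exact ih fun k hk => hl k (List.mem_cons_of_mem _ hk)

theorem Module.Dual.comp_prod_preReflection_of_pairwise_lt [LinearOrder ι] (g : Dual K V)
    {l : List ι} (hl : l.Pairwise (· < ·)) {i : ι} (hi : i ∈ l)
    (hbelow : ∀ k < i, g (r k) = 0)
    (habove : ∀ k, i < k → (g ∘ₗ preReflection (r i) (φ i)) (r k) = 0) :
    g ∘ₗ (l.map fun k => preReflection (r k) (φ k)).prod = g ∘ₗ preReflection (r i) (φ i) := by
  obtain ⟨l₁, l₂, rfl⟩ := List.append_of_mem hi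
  rw [List.pairwise_append, List.pairwise_cons] at hl
  rw [List.map_append, List.prod_append, List.map_cons, List.prod_cons, Module.End.mul_eq_comp,
    ← LinearMap.comp_assoc, comp_prod_preReflection_of_forall_eq_zero g
      fun k hk => hbelow k (hl.2.2 k hk i List.mem_cons_self),
    Module.End.mul_eq_comp, ← LinearMap.comp_assoc,
    comp_prod_preReflection_of_forall_eq_zero _ fun k hk => habove k (hl.2.1.1 k hk)]

end PreReflection

theorem Module.Basis.mul_toMatrix_apply {K V ι : Type*} [CommRing K] [AddCommGroup V]
    [Module K V] [Fintype ι] [DecidableEq ι] (b : Basis ι K V) (A : Matrix ι ι K)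
    (f : V →ₗ[K] V) (i j : ι) :
    (A * LinearMap.toMatrix b b f) i j = b.constr K (A i) (f (b j)) := by
  conv_rhs => rw [← b.sum_repr (f (b j))]
  simp [Matrix.mul_apply, LinearMap.toMatrix_apply, mul_comm]

theorem coleman_coxeter_matrix_general (K : Subfield ℂ) (V : Type*) [AddCommGroup V]
    [Module K V] {n : ℕ}
    (b : Module.Basis (Fin n) K V) (s : Fin n → V ≃ₗ[K] V)
    (rv : Fin n → V →ₗ[K] K)
    (hs : ∀ i x, s i x = x - rv i x • b i)
    (U L : Matrix (Fin n) (Fin n) K)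
    (hU1 : ∀ i, U i i = 1) (hU0 : ∀ i j : Fin n, j < i → U i j = 0)
    (hL0 : ∀ i j : Fin n, i < j → L i j = 0)
    (hUL : U + L = Matrix.of fun i j => rv i (b j)) :
    LinearMap.toMatrix b b (List.ofFn fun i => (s i).toLinearMap).prod = -(U⁻¹ * L) := by
  set c := ((List.finRange n).map fun i => preReflection (b i) (rv i)).prod
  have hc : (List.ofFn fun i => (s i).toLinearMap).prod = c := by
    rw [List.ofFn_eq_map]
    congr 2
    ext i x
    simp [hs, preReflection_apply]
  have hrow (i : Fin n) : b.constr K (U i) ∘ₗ c = -b.constr K (L i) := by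
    have hcartan : b.constr K (U i) ∘ₗ preReflection (b i) (rv i) = -b.constr K (L i) := by
      refine b.ext fun j => ?_
      have hC := congrFun₂ hUL i j
      simp only [Matrix.add_apply, Matrix.of_apply] at hC
      simp [Dual.comp_preReflection, b.constr_basis, hU1, ← hC]
    rw [← hcartan]
    refine Dual.comp_prod_preReflection_of_pairwise_lt _ (List.pairwise_lt_finRange n)
      (List.mem_finRange i) (fun k hk => ?_) (fun k hk => ?_)
    · simpa [b.constr_basis] using hU0 i k hk
    · simpa [hcartan, b.constr_basis] using hL0 i k hk
  have hUc : U * LinearMap.toMatrix b b c = -L := by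
    ext i j
    rw [b.mul_toMatrix_apply, ← LinearMap.comp_apply, hrow]
    simp [b.constr_basis]
  have hdet : IsUnit U.det := by
    rw [Matrix.det_of_isUpperTriangular hU0]
    simp [hU1]
  rw [hc, ← Matrix.nonsing_inv_mul_cancel_left U (LinearMap.toMatrix b b c) hdet, hUc,
    Matrix.mul_neg]

/-- Coleman's lemma: writing the Cartan matrix as `C = U + L` with `U` upper
triangular unipotent and `L` lower triangular with diagonal `-ζ_i`, the matrix of
the Coxeter element `c = s_1 ⋯ s_n` in the basis of roots equals `-U⁻¹ L`. -/
theorem coleman_coxeter_matrix (K : Subfield ℂ) (V : Type*) [AddCommGroup V]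
    [Module K V] [FiniteDimensional K V] {n : ℕ}
    (b : Module.Basis (Fin n) K V) (s : Fin n → V ≃ₗ[K] V)
    (rv : Fin n → V →ₗ[K] K) (ζ : Fin n → K)
    (hord : ∀ i, IsOfFinOrder (s i))
    (hs : ∀ i x, s i x = x - rv i x • b i)
    (hζ : ∀ i, rv i (b i) = 1 - ζ i)
    (U L : Matrix (Fin n) (Fin n) K)
    (hU1 : ∀ i, U i i = 1) (hU0 : ∀ i j : Fin n, j < i → U i j = 0)
    (hL1 : ∀ i, L i i = -ζ i) (hL0 : ∀ i j : Fin n, i < j → L i j = 0)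
    (hUL : U + L = Matrix.of fun i j => rv i (b j)) :
    LinearMap.toMatrix b b (List.ofFn fun i => (s i).toLinearMap).prod = -(U⁻¹ * L) :=
  coleman_coxeter_matrix_general K V b s rv hs U L hU1 hU0 hL0 hUL
end

section
/- With notation as in Coleman's lemma (c = s_1⋯s_n with matrix −U⁻¹L, C = U + L, U upper unipotent), the characteristic polynomial of c satisfies χ_c(x) = det(xU + L); in particular det(C) = χ_c(1). -/
/-!
Write `s i = 1 - (rv i).smulRight (b i)`. Peeling off one factor at a time, the product
`c = s 0 ⋯ s (n-1)` equals `1 - ∑ i, (τ i).smulRight (b i)` with `τ i = rv i ∘ s (i+1) ⋯ s (n-1)`,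
and the same expansion of `s (k+1) ⋯ s (n-1)` shows `rv k = ∑ m, U k m • τ m`, because the strictly
upper part of `C` is that of `U`. Hence `U * c = U - C = -L` as matrices, so `X U + L = U (X - c)`,
and `det U = 1` gives `χ_c = det (X U + L)`; evaluating at `1` gives `det C = χ_c(1)`.
-/

open Polynomial Module Finset

section Transvections

variable {R V : Type*} [CommRing R] [AddCommGroup V] [Module R V]

theorem exists_prod_ofFn_one_sub_smulRight {n : ℕ} (φ : Fin n → Dual R V) (v : Fin n → V) :
    ∃ τ : Fin n → Dual R V,
      (List.ofFn fun i => 1 - (φ i).smulRight (v i)).prod = 1 - ∑ i, (τ i).smulRight (v i) ∧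
      ∀ k, φ k = τ k + ∑ m > k, φ k (v m) • τ m := by
  induction n with
  | zero => exact ⟨Fin.elim0, by simp, fun k => k.elim0⟩
  | succ n ih =>
    obtain ⟨τ, hc, hτ⟩ := ih (fun i => φ i.succ) (fun i => v i.succ)
    set c := (List.ofFn fun i : Fin n => 1 - (φ i.succ).smulRight (v i.succ)).prod
    refine ⟨Fin.cons (φ 0 ∘ₗ c) τ, ?_, Fin.cases ?_ fun k => ?_⟩
    · rw [List.ofFn_succ, List.prod_cons]
      change (1 - (φ 0).smulRight (v 0)) * c = _
      rw [Fin.sum_univ_succ]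
      simp only [Fin.cons_zero, Fin.cons_succ]
      rw [sub_add_eq_sub_sub_swap, ← hc]
      ext x
      simp
    · ext x
      simp [hc, Finset.sum_apply, mul_comm]
    · simp only [Fin.sum_Ioi_succ, Fin.cons_succ]
      exact hτ k

variable {ι : Type*} [Fintype ι]

theorem eq_sum_of_eq_add_sum_Ioi [LinearOrder ι] [LocallyFiniteOrderTop ι] (v : ι → V)
    (φ τ : ι → Dual R V) (U : Matrix ι ι R) (hU1 : ∀ i, U i i = 1)
    (hU0 : ∀ i j, j < i → U i j = 0) (hUφ : ∀ i j, i < j → U i j = φ i (v j))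
    (hτ : ∀ k, φ k = τ k + ∑ m > k, φ k (v m) • τ m) (k : ι) :
    φ k = ∑ m, U k m • τ m :=
  calc φ k = τ k + ∑ m > k, φ k (v m) • τ m := hτ k
    _ = ∑ m ∈ Ici k, U k m • τ m := by
      rw [← Ioi_insert, sum_insert notMem_Ioi_self, hU1, one_smul]
      exact congrArg _ <| sum_congr rfl fun m hm => by rw [hUφ k m (mem_Ioi.1 hm)]
    _ = ∑ m, U k m • τ m := sum_subset (subset_univ _) fun m _ hm => by
      rw [hU0 k m (by simpa using hm), zero_smul]

theorem Matrix.mul_toMatrix_one_sub_sum_smulRight [DecidableEq ι] (b : Basis ι R V)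
    (φ τ : ι → Dual R V) (U : Matrix ι ι R) (hφ : ∀ k, φ k = ∑ m, U k m • τ m) :
    U * LinearMap.toMatrix b b (1 - ∑ i, (τ i).smulRight (b i)) =
      U - .of fun k j => φ k (b j) := by
  ext k j
  simp only [Matrix.mul_apply, LinearMap.toMatrix_apply]
  simp [hφ, mul_sub, Finsupp.single_apply, Finset.sum_apply]

end Transvections

section Charpoly

variable {ι R : Type*} [Fintype ι] [DecidableEq ι] [CommRing R]

theorem Matrix.charpoly_eq_det_X_mul_add (M U L : Matrix ι ι R) (hU : U.det = 1)
    (h : U * M = -L) : M.charpoly = (Matrix.of fun i j => X * C (U i j) + C (L i j)).det := by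
  have hfactor : (Matrix.of fun i j => X * C (U i j) + C (L i j)) = U.map C * M.charmatrix := by
    rw [charmatrix, mul_sub, RingHom.mapMatrix_apply, ← Matrix.map_mul, h]
    refine Matrix.ext fun i j => ?_
    simp [Matrix.scalar_apply]
  rw [hfactor, det_mul, ← RingHom.mapMatrix_apply, ← RingHom.map_det, hU, map_one, one_mul]
  rfl

theorem Matrix.eval_det_X_mul_add (U L : Matrix ι ι R) (r : R) :
    (Matrix.of fun i j => X * C (U i j) + C (L i j)).det.eval r = (r • U + L).det := by
  rw [← coe_evalRingHom, RingHom.map_det]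
  congr 1
  ext i j
  simp [mul_comm _ r]

end Charpoly

theorem coleman_charpoly_general (K : Subfield ℂ) (V : Type*) [AddCommGroup V]
    [Module K V] {n : ℕ}
    (b : Module.Basis (Fin n) K V) (s : Fin n → V ≃ₗ[K] V)
    (rv : Fin n → V →ₗ[K] K)
    (hs : ∀ i x, s i x = x - rv i x • b i)
    (U L : Matrix (Fin n) (Fin n) K)
    (hU1 : ∀ i, U i i = 1) (hU0 : ∀ i j : Fin n, j < i → U i j = 0)
    (hL0 : ∀ i j : Fin n, i < j → L i j = 0)
    (hUL : U + L = Matrix.of fun i j => rv i (b j)) :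
    (LinearMap.toMatrix b b (List.ofFn fun i => (s i).toLinearMap).prod).charpoly =
      (Matrix.of fun i j => Polynomial.X * Polynomial.C (U i j) + Polynomial.C (L i j)).det ∧
    (Matrix.of fun i j => rv i (b j)).det =
      (LinearMap.toMatrix b b (List.ofFn fun i => (s i).toLinearMap).prod).charpoly.eval 1 := by
  have hs' : ∀ i, (s i).toLinearMap = 1 - (rv i).smulRight (b i) :=
    fun i => LinearMap.ext fun x => by simp [hs]
  have hUrv : ∀ i j, i < j → U i j = rv i (b j) := fun i j hij => by
    simpa [hL0 i j hij] using congr_fun₂ hUL i j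
  obtain ⟨τ, hprod, hτ⟩ := exists_prod_ofFn_one_sub_smulRight rv b
  have hUc : U * LinearMap.toMatrix b b (List.ofFn fun i => (s i).toLinearMap).prod = -L := by
    rw [funext hs', hprod, Matrix.mul_toMatrix_one_sub_sum_smulRight b rv τ U
      (eq_sum_of_eq_add_sum_Ioi b rv τ U hU1 hU0 hUrv hτ), ← hUL]
    abel
  have hdetU : U.det = 1 := by
    rw [Matrix.det_of_isUpperTriangular fun i j h => hU0 i j h]
    simp [hU1]
  have hχ := Matrix.charpoly_eq_det_X_mul_add _ U L hdetU hUc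
  rw [hχ, Matrix.eval_det_X_mul_add, one_smul, hUL]
  exact ⟨rfl, rfl⟩

/-- With `C = U + L` as in Coleman's lemma, the characteristic polynomial of the
Coxeter element `c = s_1 ⋯ s_n` is `χ_c(x) = det(xU + L)`; in particular
`det C = χ_c(1)`. -/
theorem coleman_charpoly (K : Subfield ℂ) (V : Type*) [AddCommGroup V]
    [Module K V] [FiniteDimensional K V] {n : ℕ}
    (b : Module.Basis (Fin n) K V) (s : Fin n → V ≃ₗ[K] V)
    (rv : Fin n → V →ₗ[K] K) (ζ : Fin n → K)
    (hord : ∀ i, IsOfFinOrder (s i))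
    (hs : ∀ i x, s i x = x - rv i x • b i)
    (hζ : ∀ i, rv i (b i) = 1 - ζ i)
    (U L : Matrix (Fin n) (Fin n) K)
    (hU1 : ∀ i, U i i = 1) (hU0 : ∀ i j : Fin n, j < i → U i j = 0)
    (hL1 : ∀ i, L i i = -ζ i) (hL0 : ∀ i j : Fin n, i < j → L i j = 0)
    (hUL : U + L = Matrix.of fun i j => rv i (b j)) :
    (LinearMap.toMatrix b b (List.ofFn fun i => (s i).toLinearMap).prod).charpoly =
      (Matrix.of fun i j => Polynomial.X * Polynomial.C (U i j) + Polynomial.C (L i j)).det ∧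
    (Matrix.of fun i j => rv i (b j)).det =
      (LinearMap.toMatrix b b (List.ofFn fun i => (s i).toLinearMap).prod).charpoly.eval 1 :=
  coleman_charpoly_general K V b s rv hs U L hU1 hU0 hL0 hUL
end

section
/- With notation as above, the fixed-point space of the Coxeter element c = s_1 ⋯ s_n equals the kernel of the Cartan matrix C (viewed as an endomorphism in the r_i basis), and this equals the intersection of the reflecting hyperplanes ⋂_i ker(ř_i). -/
/-!
Write `c = s₁ c'` with `c' = s₂ ⋯ sₙ`. Each `sᵢ` moves vectors only along `rᵢ`, so `c' x - x` lies
in the span of `r₂, …, rₙ`, while `c x - x = (c' x - x) - ř₁(c' x) r₁`. As `r₁` is not in that span,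
`c x = x` forces `ř₁(c' x) = 0` and `c' x = x`, and induction on `n` gives `řᵢ x = 0` for all `i`.
The Cartan matrix is the matrix of `x ↦ ∑ řᵢ(x) rᵢ`, whose kernel is `⋂ ker řᵢ` by linear
independence of the roots.
-/

theorem List.prod_apply_sub_self_mem {R V : Type*} [Ring R] [AddCommGroup V] [Module R V]
    {W : Submodule R V} (L : List (Module.End R V)) (hL : ∀ g ∈ L, ∀ y, g y - y ∈ W) (x : V) :
    L.prod x - x ∈ W := by
  induction L with
  | nil => simp
  | cons g L ih =>
    rw [List.prod_cons, Module.End.mul_apply, ← sub_add_sub_cancel _ (L.prod x)]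
    exact W.add_mem (hL g List.mem_cons_self _)
      (ih fun g' hg' => hL g' (List.mem_cons_of_mem g hg'))

section CommRing

variable {R V ι : Type*} [CommRing R] [AddCommGroup V] [Module R V] [Fintype ι]

theorem Matrix.toLin_of_apply_basis [DecidableEq ι] (b : Module.Basis ι R V)
    (φ : ι → V →ₗ[R] R) :
    Matrix.toLin b b (Matrix.of fun i j => φ i (b j)) = ∑ i, (φ i).smulRight (b i) := by
  rw [← Matrix.toLin_toMatrix b b (∑ i, (φ i).smulRight (b i))]
  congr 1
  ext i j
  simp [LinearMap.toMatrix_apply, Finsupp.single_apply]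

theorem LinearMap.ker_sum_smulRight {v : ι → V} (hv : LinearIndependent R v)
    (φ : ι → V →ₗ[R] R) :
    LinearMap.ker (∑ i, (φ i).smulRight (v i)) = ⨅ i, LinearMap.ker (φ i) := by
  ext x
  simp only [LinearMap.mem_ker, Submodule.mem_iInf, LinearMap.sum_apply,
    LinearMap.smulRight_apply]
  exact ⟨fun h => Fintype.linearIndependent_iff.mp hv _ h, fun h => by simp [h]⟩

end CommRing

section DivisionRing

variable {K V : Type*} [DivisionRing K] [AddCommGroup V] [Module K V]

theorem eq_zero_and_eq_zero_of_sub_smul_eq_zero {W : Submodule K V} {w v : V} {c : K}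
    (hw : w ∈ W) (hv : v ∉ W) (h : w - c • v = 0) : w = 0 ∧ c = 0 := by
  obtain rfl : c = 0 := by
    by_contra hc
    rw [sub_eq_zero] at h
    exact hv (by simpa [h, smul_smul, hc] using W.smul_mem c⁻¹ hw)
  simpa using h

theorem ofFn_prod_reflections_apply_eq_self_iff {n : ℕ} {f : Fin n → Module.End K V}
    {φ : Fin n → V →ₗ[K] K} {v : Fin n → V} (hv : LinearIndependent K v)
    (hf : ∀ i x, f i x = x - φ i x • v i) (x : V) :
    (List.ofFn f).prod x = x ↔ ∀ i, φ i x = 0 := by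
  induction n with
  | zero => simp
  | succ n ih =>
    rw [linearIndependent_finSucc] at hv
    set y := (List.ofFn fun i => f i.succ).prod x
    have hy : y - x ∈ Submodule.span K (Set.range (Fin.tail v)) := by
      refine List.prod_apply_sub_self_mem _ (fun g hg z => ?_) x
      obtain ⟨i, rfl⟩ := (List.mem_ofFn' _ _).mp hg
      simpa [hf, Fin.tail] using Submodule.smul_mem _ (-φ i.succ z)
        (Submodule.subset_span (Set.mem_range_self (f := Fin.tail v) i))
    rw [List.ofFn_succ, List.prod_cons, Module.End.mul_apply, hf, Fin.forall_fin_succ,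
      ← ih hv.1 (fun i => hf i.succ)]
    constructor
    · intro h
      obtain ⟨hyx, hφ⟩ := eq_zero_and_eq_zero_of_sub_smul_eq_zero hy hv.2 (by rw [← h]; abel)
      rw [sub_eq_zero] at hyx
      exact ⟨hyx ▸ hφ, hyx⟩
    · rintro ⟨hφ, hyx⟩
      rw [hyx, hφ, zero_smul, sub_zero]

end DivisionRing

theorem coxeter_fixed_space_general (K : Subfield ℂ) (V : Type*) [AddCommGroup V]
    [Module K V] {n : ℕ}
    (b : Module.Basis (Fin n) K V) (s : Fin n → V ≃ₗ[K] V)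
    (rv : Fin n → V →ₗ[K] K)
    (hs : ∀ i x, s i x = x - rv i x • b i)
 :
    LinearMap.ker ((List.ofFn fun i => (s i).toLinearMap).prod - LinearMap.id) =
      LinearMap.ker (Matrix.toLin b b (Matrix.of fun i j => rv i (b j))) ∧
    LinearMap.ker (Matrix.toLin b b (Matrix.of fun i j => rv i (b j))) =
      ⨅ i, LinearMap.ker (rv i) := by
  rw [Matrix.toLin_of_apply_basis, LinearMap.ker_sum_smulRight b.linearIndependent]
  refine ⟨?_, rfl⟩
  ext x
  rw [LinearMap.mem_ker, LinearMap.sub_apply, LinearMap.id_apply, sub_eq_zero,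
    ofFn_prod_reflections_apply_eq_self_iff b.linearIndependent hs, Submodule.mem_iInf]
  rfl

/-- The fixed-point space of the Coxeter element `c = s_1 ⋯ s_n` equals the
kernel of the Cartan matrix `C` (viewed as an endomorphism in the root basis),
which equals the intersection of the reflecting hyperplanes `⋂_i ker ř_i`. -/
theorem coxeter_fixed_space (K : Subfield ℂ) (V : Type*) [AddCommGroup V]
    [Module K V] [FiniteDimensional K V] {n : ℕ}
    (b : Module.Basis (Fin n) K V) (s : Fin n → V ≃ₗ[K] V)
    (rv : Fin n → V →ₗ[K] K) (ζ : Fin n → K)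
    (hord : ∀ i, IsOfFinOrder (s i))
    (hs : ∀ i x, s i x = x - rv i x • b i)
    (hζ : ∀ i, rv i (b i) = 1 - ζ i)
 :
    LinearMap.ker ((List.ofFn fun i => (s i).toLinearMap).prod - LinearMap.id) =
      LinearMap.ker (Matrix.toLin b b (Matrix.of fun i j => rv i (b j))) ∧
    LinearMap.ker (Matrix.toLin b b (Matrix.of fun i j => rv i (b j))) =
      ⨅ i, LinearMap.ker (rv i) :=
  coxeter_fixed_space_general K V b s rv hs
end

section
/- Let (s_1,…,s_n) be complex reflections whose roots r_i form a basis of V with Cartan matrix C. An element g ∈ GL(V) commutes with every s_i if and only if g acts as a scalar on each subspace spanned by { r_i : i ∈ I } for every block I of C, where a block is a connected component of the graph on {1,…,n} with an edge (i,j) whenever C_{ij} ≠ 0 or C_{ji} ≠ 0. -/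
/-!
A map `g` commutes with the pseudo-reflection `x ↦ x - f x • r` (where `f r ≠ 0`) exactly when
`r` is an eigenvector of `g` and `f` is an eigenvector of the transpose of `g`, with the same
eigenvalue `μ`. Commuting with every `s i` thus makes `g` diagonal in the basis of roots, say
`g (b j) = μ j • b j`, and then `rv i ∘ g = μ i • rv i` says exactly that `μ i = μ j` whenever
`rv i (b j) ≠ 0`; so `μ` is constant on the blocks of the Cartan matrix.
-/

namespace Module

variable {K V ι : Type*} [Field K] [AddCommGroup V] [Module K V]

theorem commute_preReflection_iff {r : V} {f : Dual K V} (hr : f r ≠ 0) (g : End K V) :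
    Commute g (preReflection r f) ↔ ∃ μ : K, g r = μ • r ∧ f ∘ₗ g = μ • f := by
  have hr0 : r ≠ 0 := fun h => hr (by simp [h])
  have hcomm : Commute g (preReflection r f) ↔ ∀ x, f x • g r = f (g x) • r := by
    simp only [Commute, SemiconjBy, LinearMap.ext_iff, End.mul_apply, preReflection_apply,
      map_sub, map_smul, sub_right_inj]
  rw [hcomm]
  constructor
  · intro h
    obtain ⟨μ, hgr⟩ : ∃ μ : K, g r = μ • r := ⟨(f r)⁻¹ * f (g r), calc
      g r = (f r)⁻¹ • (f r • g r) := (inv_smul_smul₀ hr _).symm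
      _ = ((f r)⁻¹ * f (g r)) • r := by rw [h r, smul_smul]⟩
    refine ⟨μ, hgr, LinearMap.ext fun x => smul_left_injective K hr0 ?_⟩
    change f (g x) • r = (μ * f x) • r
    rw [← h x, hgr, smul_smul, mul_comm]
  · rintro ⟨μ, hgr, hfg⟩ x
    rw [hgr, smul_smul, ← LinearMap.comp_apply, hfg, LinearMap.smul_apply, smul_eq_mul, mul_comm]

theorem Basis.comp_eq_smul_iff (b : Basis ι K V) {g : End K V} {μ : ι → K}
    (hg : ∀ j, g (b j) = μ j • b j) (f : Dual K V) (c : K) :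
    f ∘ₗ g = c • f ↔ ∀ j, f (b j) ≠ 0 → μ j = c := by
  refine (show f ∘ₗ g = c • f ↔ _ from ⟨fun h j => by rw [h], b.ext⟩).trans ?_
  simp only [LinearMap.comp_apply, hg, map_smul, LinearMap.smul_apply, smul_eq_mul,
    mul_eq_mul_right_iff, or_iff_not_imp_right]

theorem exists_smul_on_eqvGen_classes_iff {R : ι → ι → Prop} {v : ι → V} (hv : ∀ j, v j ≠ 0)
    (g : V → V) :
    (∀ i, ∃ c : K, ∀ j, Relation.EqvGen R i j → g (v j) = c • v j) ↔
      ∃ μ : ι → K, (∀ j, g (v j) = μ j • v j) ∧ ∀ i j, R i j → μ i = μ j := by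
  constructor
  · intro h
    choose μ hμ using h
    have hgv : ∀ j, g (v j) = μ j • v j := fun j => hμ j j (.refl j)
    refine ⟨μ, hgv, fun i j hij => smul_left_injective K (hv j) ?_⟩
    simp only [← hμ i j (.rel i j hij), hgv]
  · rintro ⟨μ, hgv, hμ⟩ i
    refine ⟨μ i, fun j hij => ?_⟩
    rw [hgv, (Setoid.ker μ).iseqv.eqvGen_iff.mp (Relation.EqvGen.mono hμ i j hij)]

end Module

open Module in
theorem commutes_iff_scalar_on_blocks_general (K : Subfield ℂ) (V : Type*) [AddCommGroup V]
    [Module K V] {n : ℕ}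
    (b : Module.Basis (Fin n) K V) (s : Fin n → V ≃ₗ[K] V)
    (rv : Fin n → V →ₗ[K] K)
    (hs : ∀ i x, s i x = x - rv i x • b i)
    (hζ : ∀ i, rv i (b i) ≠ 0)
    (g : V ≃ₗ[K] V) :
    (∀ (i : Fin n) (x : V), g (s i x) = s i (g x)) ↔
      (∀ i : Fin n, ∃ μ : K, ∀ j : Fin n,
        Relation.EqvGen (fun i j : Fin n => rv i (b j) ≠ 0 ∨ rv j (b i) ≠ 0) i j →
          g (b j) = μ • b j) := by
  have hcomm : (∀ i x, g (s i x) = s i (g x)) ↔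
      ∀ i, Commute (g : End K V) (preReflection (b i) (rv i)) := by
    simp only [Commute, SemiconjBy, LinearMap.ext_iff, End.mul_apply, preReflection_apply, ← hs,
      LinearEquiv.coe_coe]
  rw [hcomm, exists_smul_on_eqvGen_classes_iff b.ne_zero]
  simp only [commute_preReflection_iff (hζ _), Classical.skolem, forall_and]
  refine exists_congr fun μ => and_congr_right fun hg => ?_
  simp only [b.comp_eq_smul_iff hg]
  constructor
  · rintro h i j (hij | hji)
    exacts [(h i j hij).symm, h j i hji]
  · exact fun h i j hij => (h i j (.inl hij)).symm

/-- An element `g ∈ GL(V)` commutes with all the reflections `s_i` iff it acts by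
a scalar on the span of the roots of each block of the Cartan matrix `C`, where a
block is a connected component of the graph on `{1,…,n}` with an edge `(i,j)`
whenever `C_{ij} ≠ 0` or `C_{ji} ≠ 0`. -/
theorem commutes_iff_scalar_on_blocks (K : Subfield ℂ) (V : Type*) [AddCommGroup V]
    [Module K V] [FiniteDimensional K V] {n : ℕ}
    (b : Module.Basis (Fin n) K V) (s : Fin n → V ≃ₗ[K] V)
    (rv : Fin n → V →ₗ[K] K)
    (hord : ∀ i, IsOfFinOrder (s i))
    (hs : ∀ i x, s i x = x - rv i x • b i)
    (hζ : ∀ i, rv i (b i) ≠ 0)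
    (g : V ≃ₗ[K] V) :
    (∀ (i : Fin n) (x : V), g (s i x) = s i (g x)) ↔
      (∀ i : Fin n, ∃ μ : K, ∀ j : Fin n,
        Relation.EqvGen (fun i j : Fin n => rv i (b j) ≠ 0 ∨ rv j (b i) ≠ 0) i j →
          g (b j) = μ • b j) :=
  commutes_iff_scalar_on_blocks_general K V b s rv hs hζ g
end
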